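/- For every integer n ≥ 3, there is a factor of the Thue–Morse word t of length 2^{n-3}+2 that is not a factor of μ^{n-1}(a); explicitly, the word t₁(μ^{n-3}(b))·μ^{n-3}(a)·b is such a factor, where t₁(u) denotes the last letter of u. -/

import Mathlib

def mu (w : List Bool) : List Bool := w.flatMap (fun x => [x, !x])

def tm (n : ℕ) : Bool := (Nat.digits 2 n).sum % 2 == 1

def IsFactorTM (w : List Bool) : Prop :=
  ∃ i : ℕ, w = (List.range w.length).map (fun k => tm (i + k))

def subst (fa fb : List Bool) (w : List Bool) : List Bool :=
  w.flatMap (fun x => if x then fb else fa)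

/-!
Let `w m = t₁(μ^m(b)) μ^m(a) b`. Since `t[a·2^m + r] = t[a] xor t[r]` for `r < 2^m` and
`t[11] t[12] t[13] = bab`, the block `μ^m(b) μ^m(a) μ^m(b)` starts at position `11·2^m` of `t`,
so `w m` occurs at `12·2^m - 1`.

Conversely, suppose `w (m + 2)` occurs at position `p`. Its letters at offsets `2, 3` are `bb`,
which is not the `μ`-image of a letter, so `p` is odd, and reading the occurrence two letters at a
time gives an occurrence of `w (m + 1)` at `(p - 1) / 2`. As halving maps occurrences inside
`μ^{m+4}(a) = t[0, 2^{m+4})` to occurrences inside `μ^{m+3}(a)`, the claim that `w m` is not a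
factor of `μ^{m+2}(a)` reduces to `m ≤ 1`, a finite check.
-/

@[simp] theorem tm_zero : tm 0 = false := rfl

theorem tm_two_mul (k : ℕ) : tm (2 * k) = tm k := by
  rcases Nat.eq_zero_or_pos k with rfl | hk
  · rfl
  · simp [tm, Nat.digits_def' one_lt_two (by omega : 0 < 2 * k)]

theorem tm_two_mul_add_one (k : ℕ) : tm (2 * k + 1) = !tm k := by
  rw [tm, tm, Nat.digits_def' one_lt_two (Nat.succ_pos (2 * k)), List.sum_cons,
    show (2 * k + 1) % 2 = 1 by omega, show (2 * k + 1) / 2 = k by omega]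
  rcases Nat.mod_two_eq_zero_or_one (Nat.digits 2 k).sum with h | h <;> simp [Nat.add_mod, h]

theorem tm_mul_two_pow_add (a : ℕ) {m r : ℕ} (hr : r < 2 ^ m) :
    tm (a * 2 ^ m + r) = (tm a ^^ tm r) := by
  induction m generalizing r with
  | zero => simp_all
  | succ m ih =>
    rw [pow_succ] at hr
    obtain ⟨s, rfl | rfl⟩ := Nat.even_or_odd' r
    · rw [show a * 2 ^ (m + 1) + 2 * s = 2 * (a * 2 ^ m + s) by ring, tm_two_mul, tm_two_mul,
        ih (by omega)]
    · rw [show a * 2 ^ (m + 1) + (2 * s + 1) = 2 * (a * 2 ^ m + s) + 1 by ring,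
        tm_two_mul_add_one, tm_two_mul_add_one, ih (by omega), Bool.xor_not]

theorem mu_append (u v : List Bool) : mu (u ++ v) = mu u ++ mu v := List.flatMap_append

theorem mu_iterate_append (m : ℕ) (u v : List Bool) :
    mu^[m] (u ++ v) = mu^[m] u ++ mu^[m] v :=
  (Function.Semiconj₂.iterate mu_append m) u v

theorem mu_iterate_singleton (m : ℕ) (c : Bool) :
    mu^[m] [c] = (List.range (2 ^ m)).map (fun k => c ^^ tm k) := by
  induction m generalizing c with
  | zero => simp
  | succ m ih =>
    rw [Function.iterate_succ_apply, show mu [c] = [c] ++ [!c] from rfl, mu_iterate_append,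
      ih, ih, pow_succ, mul_two, List.range_add, List.map_append, List.map_map]
    congr 1
    refine List.map_congr_left fun k hk => ?_
    rw [Function.comp_apply, ← one_mul (2 ^ m), tm_mul_two_pow_add 1 (List.mem_range.mp hk)]
    simp [show tm 1 = true by decide]

theorem length_mu_iterate_singleton (m : ℕ) (c : Bool) : (mu^[m] [c]).length = 2 ^ m := by
  simp [mu_iterate_singleton]

theorem getLast!_mu_iterate_singleton (m : ℕ) (c : Bool) :
    (mu^[m] [c]).getLast! = (c ^^ tm (2 ^ m - 1)) := by
  simp [mu_iterate_singleton, List.getLast?_range]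

theorem mu_iterate_false (m : ℕ) : mu^[m] [false] = (List.range (2 ^ m)).map tm := by
  simp [mu_iterate_singleton]

theorem List.exists_eq_map_range_of_infix_map_range {α : Type*} {w : List α} {f : ℕ → α}
    {N : ℕ} (h : w <:+: (List.range N).map f) :
    ∃ p, p + w.length ≤ N ∧ w = (List.range w.length).map (fun k => f (p + k)) := by
  obtain ⟨p, hle, hw⟩ := List.infix_iff_getElem?.mp h
  rw [List.length_map, List.length_range] at hle
  refine ⟨p, by omega, List.ext_getElem (by simp) fun i hi _ => ?_⟩
  have := hw i hi
  rw [List.getElem?_map, List.getElem?_range (by omega)] at this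
  simpa [add_comm] using this.symm

theorem List.map_range_add_two {α : Type*} (g : ℕ → α) (n : ℕ) :
    (List.range (n + 2)).map g =
      g 0 :: ((List.range n).map (fun j => g (1 + j)) ++ [g (n + 1)]) := by
  rw [List.range_succ, List.range_succ_eq_map]
  simp [add_comm]

def IsFactorTMAt (w : List Bool) (p : ℕ) : Prop :=
  w = (List.range w.length).map (fun k => tm (p + k))

def witnessWord (m : ℕ) : List Bool := [(mu^[m] [true]).getLast!] ++ mu^[m] [false] ++ [true]

theorem length_witnessWord (m : ℕ) : (witnessWord m).length = 2 ^ m + 2 := by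
  simp [witnessWord, length_mu_iterate_singleton]

theorem isFactorTMAt_witnessWord_iff (m p : ℕ) :
    IsFactorTMAt (witnessWord m) p ↔ tm p = !tm (2 ^ m - 1) ∧
      (∀ j < 2 ^ m, tm (p + 1 + j) = tm j) ∧ tm (p + 2 ^ m + 1) = true := by
  rw [IsFactorTMAt, length_witnessWord, List.map_range_add_two, witnessWord,
    getLast!_mu_iterate_singleton, mu_iterate_false]
  simp [add_assoc, Bool.eq_not, ne_comm, eq_comm (a := tm _) (b := tm (p + _))]

theorem isFactorTMAt_witnessWord_of_two_mul_add_one {m q : ℕ}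
    (h : IsFactorTMAt (witnessWord (m + 1)) (2 * q + 1)) : IsFactorTMAt (witnessWord m) q := by
  rw [isFactorTMAt_witnessWord_iff] at h ⊢
  obtain ⟨hfirst, hmid, hlast⟩ := h
  have hpow : 2 ^ (m + 1) = 2 * 2 ^ m := by ring
  have hpos : 0 < 2 ^ m := by positivity
  refine ⟨?_, fun j hj => ?_, ?_⟩
  · rwa [show 2 ^ (m + 1) - 1 = 2 * (2 ^ m - 1) + 1 by omega, tm_two_mul_add_one,
      tm_two_mul_add_one, Bool.not_inj_iff] at hfirst
  · have := hmid (2 * j) (by omega)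
    rwa [show 2 * q + 1 + 1 + 2 * j = 2 * (q + 1 + j) by ring, tm_two_mul, tm_two_mul] at this
  · rwa [show 2 * q + 1 + 2 ^ (m + 1) + 1 = 2 * (q + 2 ^ m + 1) by omega, tm_two_mul] at hlast

theorem odd_of_isFactorTMAt_witnessWord {m p : ℕ} (h : IsFactorTMAt (witnessWord (m + 2)) p) :
    Odd p := by
  rw [isFactorTMAt_witnessWord_iff] at h
  obtain ⟨-, hmid, -⟩ := h
  have h4 : 2 ^ 2 ≤ 2 ^ (m + 2) := Nat.pow_le_pow_right two_pos (by omega)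
  by_contra hp
  obtain ⟨q, rfl⟩ := Nat.not_odd_iff_even.mp hp
  have h1 := hmid 1 (by omega)
  have h2 := hmid 2 (by omega)
  rw [show q + q + 1 + 1 = 2 * (q + 1) by ring, tm_two_mul] at h1
  rw [show q + q + 1 + 2 = 2 * (q + 1) + 1 by ring, tm_two_mul_add_one, h1] at h2
  exact absurd h2 (by decide)

theorem not_isFactorTMAt_witnessWord : ∀ (m p : ℕ), p + 2 ^ m + 2 ≤ 2 ^ (m + 2) →
    ¬ IsFactorTMAt (witnessWord m) p
  | 0, p, hp => by
    have : p < 2 := by simp at hp; omega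
    unfold IsFactorTMAt
    interval_cases p <;> decide
  | 1, p, hp => by
    have : p < 5 := by simp at hp; omega
    unfold IsFactorTMAt
    interval_cases p <;> decide
  | m + 2, p, hp => fun h => by
    obtain ⟨q, rfl⟩ := odd_of_isFactorTMAt_witnessWord h
    refine not_isFactorTMAt_witnessWord (m + 1) q ?_
      (isFactorTMAt_witnessWord_of_two_mul_add_one h)
    simp only [pow_succ] at hp ⊢
    omega

theorem isFactorTMAt_witnessWord (m : ℕ) : IsFactorTMAt (witnessWord m) (12 * 2 ^ m - 1) := by
  have hpos : 0 < 2 ^ m := by positivity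
  rw [isFactorTMAt_witnessWord_iff]
  refine ⟨?_, fun j hj => ?_, ?_⟩
  · rw [show 12 * 2 ^ m - 1 = 11 * 2 ^ m + (2 ^ m - 1) by omega,
      tm_mul_two_pow_add 11 (by omega : 2 ^ m - 1 < 2 ^ m)]
    simp [show tm 11 = true by decide]
  · rw [show 12 * 2 ^ m - 1 + 1 + j = 12 * 2 ^ m + j by omega, tm_mul_two_pow_add 12 hj]
    simp [show tm 12 = false by decide]
  · rw [show 12 * 2 ^ m - 1 + 2 ^ m + 1 = 13 * 2 ^ m + 0 by omega, tm_mul_two_pow_add 13 hpos]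
    decide

/-- For n ≥ 3, the word t₁(μ^{n-3}(b))·μ^{n-3}(a)·b has length 2^{n-3}+2, is a
    factor of t, but is not a factor of μ^{n-1}(a). -/
theorem exists_factor_not_in_mu_pow (n : ℕ) (hn : 3 ≤ n) :
    IsFactorTM ([(mu^[n - 3] [true]).getLast!] ++ mu^[n - 3] [false] ++ [true]) ∧
    ¬ ([(mu^[n - 3] [true]).getLast!] ++ mu^[n - 3] [false] ++ [true])
        <:+: mu^[n - 1] [false] ∧
    ([(mu^[n - 3] [true]).getLast!] ++ mu^[n - 3] [false] ++ [true]).length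
        = 2 ^ (n - 3) + 2 := by
  obtain ⟨m, rfl⟩ := Nat.exists_eq_add_of_le' hn
  rw [Nat.add_sub_cancel, show m + 3 - 1 = m + 2 by omega]
  refine ⟨⟨_, isFactorTMAt_witnessWord m⟩, fun (h : witnessWord m <:+: _) => ?_,
    length_witnessWord m⟩
  rw [mu_iterate_false (m + 2)] at h
  obtain ⟨p, hp, hocc⟩ := List.exists_eq_map_range_of_infix_map_range h
  exact not_isFactorTMAt_witnessWord m p (by rwa [length_witnessWord] at hp) hocc
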